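/- arXiv:1106.1456 — 2 statements merged into one kernel-verified Lean document; each statement's English description precedes it below -/
import Mathlib

section
/- For any integer x ≥ 1 there exists an integrable function h : ℝ → ℂ such that ∫_ℝ |h(t)| dt ≤ 7 + log x, and for every integer n, ∫_ℝ h(t) e^{2πint} dt equals 1 if |n| ≤ x and equals 0 otherwise. -/
open Real Complex MeasureTheory Set FourierTransform

/-!
The kernel is the Fourier transform of the trapezoid `tent (x + 1) - tent x`, which is `1` on
`[-x, x]` and vanishes for `|ξ| ≥ x + 1`, so Fourier inversion gives its values at the integers.
Since `𝓕 (tent b) t = sin² (π b t) / (π t)²`, the kernel is `sin (π S t) sin (π t) / (π t)²` with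
`S = 2x + 1`. It is bounded by `S`, by `1 / (π |t|)` and by `1 / (π t)²`, which on the ranges
`|t| ≤ 1/S`, `1/S ≤ |t| ≤ 1` and `|t| ≥ 1` give `∫ |h| ≤ 2 + (2/π) log S + 2/π² ≤ 3 + log S`.
-/

lemma Real.sin_sq_sub_sin_sq (x y : ℝ) :
    Real.sin x ^ 2 - Real.sin y ^ 2 = Real.sin (x + y) * Real.sin (x - y) := by
  rw [Real.sin_add, Real.sin_sub]
  linear_combination Real.sin y ^ 2 * Real.sin_sq_add_cos_sq x
    - Real.sin x ^ 2 * Real.sin_sq_add_cos_sq y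

theorem Real.fourier_sub {V E : Type*} [NormedAddCommGroup V] [InnerProductSpace ℝ V]
    [MeasurableSpace V] [BorelSpace V] [FiniteDimensional ℝ V]
    [NormedAddCommGroup E] [NormedSpace ℂ E] {f g : V → E}
    (hf : Integrable f) (hg : Integrable g) (w : V) :
    𝓕 (f - g) w = 𝓕 f w - 𝓕 g w := by
  simp only [Real.fourier_eq, Pi.sub_apply, smul_sub]
  exact integral_sub ((Real.fourierIntegral_convergent_iff w).2 hf)
    ((Real.fourierIntegral_convergent_iff w).2 hg)

lemma integral_mul_cexp_eq_of_fourier_ae_eq {f g : ℝ → ℂ} (hf : Continuous f)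
    (hfi : Integrable f) (hfg : 𝓕 f =ᵐ[volume] g) (hg : Integrable g) (y : ℝ) :
    ∫ t, g t * cexp (2 * π * I * y * t) = f y := by
  calc ∫ t, g t * cexp (2 * π * I * y * t) = 𝓕⁻ g y := by
        rw [Real.fourierInv_eq']
        congr 1 with t
        simp only [smul_eq_mul, Real.inner_apply]
        push_cast
        ring_nf
    _ = 𝓕⁻ (𝓕 f) y := by
        rw [Real.fourierInv_eq_fourier_neg, Real.fourierInv_eq_fourier_neg,
          Real.fourier_congr_ae hfg.symm]
    _ = f y := hfi.fourierInv_fourier_eq (hg.congr hfg.symm) hf.continuousAt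

theorem MeasureTheory.Integrable.of_even_of_integrableOn_Ioi {E : Type*} [NormedAddCommGroup E]
    {f : ℝ → E} (heven : ∀ x, f (-x) = f x) (hf : IntegrableOn f (Ioi 0)) : Integrable f := by
  have hF : Integrable ((Ioi 0).indicator f) := (integrable_indicator_iff measurableSet_Ioi).2 hf
  refine (hF.add hF.comp_neg).congr ?_
  filter_upwards [Measure.ae_ne volume 0] with x hx
  rcases hx.lt_or_gt with h | h
  · simp [h, h.le, heven]
  · simp [h, h.le]

lemma integral_sub_mul_cexp (b : ℝ) {c : ℂ} (hc : c ≠ 0) :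
    ∫ ξ in (0 : ℝ)..b, ((b - ξ : ℝ) : ℂ) * cexp (c * ξ)
      = (cexp (c * b) - 1 - c * b) / c ^ 2 := by
  have hderiv (ξ : ℝ) : HasDerivAt (fun ξ : ℝ => ((b - ξ) / c + 1 / c ^ 2) * cexp (c * ξ))
      (((b - ξ : ℝ) : ℂ) * cexp (c * ξ)) ξ := by
    have hlin : HasDerivAt (fun ξ : ℝ => ((b : ℂ) - ξ) / c + 1 / c ^ 2) (-1 / c) ξ := by
      simpa using
        (((hasDerivAt_id ξ).ofReal_comp.const_sub (b : ℂ)).div_const c).add_const (1 / c ^ 2)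
    have hexp : HasDerivAt (fun ξ : ℝ => cexp (c * ξ)) (cexp (c * ξ) * c) ξ :=
      (Complex.hasDerivAt_exp _).comp ξ (by simpa using (hasDerivAt_id ξ).ofReal_comp.const_mul c)
    refine (hlin.mul hexp).congr_deriv ?_
    field_simp
    push_cast
    ring
  rw [intervalIntegral.integral_eq_sub_of_hasDerivAt (fun ξ _ => hderiv ξ)
    (by apply Continuous.intervalIntegrable; fun_prop)]
  simp only [ofReal_zero, mul_zero, Complex.exp_zero, sub_zero]
  field_simp
  ring

def tent (b ξ : ℝ) : ℝ := max (b - |ξ|) 0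

lemma continuous_tent (b : ℝ) : Continuous (tent b) := by
  unfold tent; fun_prop

lemma tent_of_abs_le {b ξ : ℝ} (h : |ξ| ≤ b) : tent b ξ = b - |ξ| :=
  max_eq_left (by linarith)

lemma tent_of_le_abs {b ξ : ℝ} (h : b ≤ |ξ|) : tent b ξ = 0 :=
  max_eq_right (by linarith)

lemma tent_eq_zero_of_notMem_Ioo {b ξ : ℝ} (h : ξ ∉ Ioo (-b) b) : tent b ξ = 0 := by
  refine tent_of_le_abs (le_abs'.mpr ?_)
  rw [mem_Ioo, not_and_or, not_lt, not_lt] at h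
  exact h

lemma integrable_tent (b : ℝ) : Integrable (tent b) :=
  (continuous_tent b).integrable_of_hasCompactSupport <|
    HasCompactSupport.intro (isCompact_Icc (a := -b) (b := b)) fun _ hξ =>
      tent_eq_zero_of_notMem_Ioo fun h => hξ (Ioo_subset_Icc_self h)

lemma integral_tent_mul_cexp {b : ℝ} (hb : 0 ≤ b) {c : ℂ} (hc : c ≠ 0) :
    ∫ ξ, (tent b ξ : ℂ) * cexp (c * ξ) = (cexp (c * b) + cexp (-c * b) - 2) / c ^ 2 := by
  set f : ℝ → ℂ := fun ξ => (tent b ξ : ℂ) * cexp (c * ξ) with hf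
  have hcont : Continuous f := by have := continuous_tent b; fun_prop
  have half (c' : ℂ) : ∀ ξ ∈ uIcc 0 b, (tent b ξ : ℂ) * cexp (c' * ξ)
      = ((b - ξ : ℝ) : ℂ) * cexp (c' * ξ) := by
    intro ξ hξ
    rw [uIcc_of_le hb] at hξ
    rw [tent_of_abs_le (by rw [abs_of_nonneg hξ.1]; exact hξ.2), abs_of_nonneg hξ.1]
  have hsupport : ∀ ξ ∉ Ioc (-b) b, f ξ = 0 := fun ξ hξ => by
    simp [hf, tent_eq_zero_of_notMem_Ioo fun h => hξ (Ioo_subset_Ioc_self h)]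
  have hright : ∫ ξ in (0 : ℝ)..b, f ξ = (cexp (c * b) - 1 - c * b) / c ^ 2 := by
    rw [intervalIntegral.integral_congr (half c), integral_sub_mul_cexp b hc]
  have hleft : ∫ ξ in (-b)..0, f ξ = (cexp (-c * b) - 1 - -c * b) / (-c) ^ 2 := by
    rw [← integral_sub_mul_cexp b (neg_ne_zero.mpr hc),
      ← intervalIntegral.integral_congr (half (-c)), ← neg_zero,
      ← intervalIntegral.integral_comp_neg, neg_zero]
    simp [hf, tent]
  rw [← setIntegral_eq_integral_of_forall_compl_eq_zero hsupport,
    ← intervalIntegral.integral_of_le (by linarith),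
    ← intervalIntegral.integral_add_adjacent_intervals (b := 0) (hcont.intervalIntegrable _ _)
      (hcont.intervalIntegrable _ _), hleft, hright]
  ring

lemma fourier_tent {b : ℝ} (hb : 0 ≤ b) {t : ℝ} (ht : t ≠ 0) :
    𝓕 (fun ξ => (tent b ξ : ℂ)) t
      = ((Real.sin (π * b * t) ^ 2 / (π ^ 2 * t ^ 2) : ℝ) : ℂ) := by
  have hc : (-2 * π * t * I : ℂ) ≠ 0 := by simp [ht, pi_ne_zero]
  have hcos : cexp (-2 * π * t * I * b) + cexp (-(-2 * π * t * I) * b)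
      = 2 * Complex.cos (2 * π * b * t) := by
    rw [Complex.two_cos]
    ring_nf
  rw [Real.fourier_real_eq_integral_exp_smul]
  simp_rw [smul_eq_mul, mul_comm (cexp _)]
  convert integral_tent_mul_cexp hb hc using 1
  · congr 1 with ξ
    push_cast
    ring_nf
  · rw [hcos, Real.sin_sq_eq_half_sub]
    push_cast
    field_simp
    rw [I_sq]
    ring_nf

def trapezoid (a ξ : ℝ) : ℝ := tent (a + 1) ξ - tent a ξ

lemma trapezoid_of_abs_le {a ξ : ℝ} (h : |ξ| ≤ a) : trapezoid a ξ = 1 := by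
  rw [trapezoid, tent_of_abs_le h, tent_of_abs_le (by linarith)]
  ring

lemma trapezoid_of_le_abs {a ξ : ℝ} (h : a + 1 ≤ |ξ|) : trapezoid a ξ = 0 := by
  rw [trapezoid, tent_of_le_abs h, tent_of_le_abs (by linarith), sub_zero]

lemma continuous_trapezoid (a : ℝ) : Continuous (trapezoid a) :=
  (continuous_tent _).sub (continuous_tent _)

lemma integrable_trapezoid (a : ℝ) : Integrable (trapezoid a) :=
  (integrable_tent _).sub (integrable_tent _)

noncomputable def unsmoothingKernel (S t : ℝ) : ℝ :=
  Real.sin (π * S * t) * Real.sin (π * t) / (π ^ 2 * t ^ 2)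

lemma fourier_trapezoid {a : ℝ} (ha : 0 ≤ a) {t : ℝ} (ht : t ≠ 0) :
    𝓕 (fun ξ => (trapezoid a ξ : ℂ)) t = unsmoothingKernel (2 * a + 1) t := by
  have hsub : (fun ξ => (trapezoid a ξ : ℂ))
      = (fun ξ => (tent (a + 1) ξ : ℂ)) - fun ξ => (tent a ξ : ℂ) := by
    ext ξ; simp [trapezoid]
  rw [hsub, Real.fourier_sub (integrable_tent _).ofReal (integrable_tent _).ofReal,
    fourier_tent (by linarith) ht, fourier_tent ha ht, ← ofReal_sub, ← sub_div,
    Real.sin_sq_sub_sin_sq, unsmoothingKernel]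
  ring_nf

lemma unsmoothingKernel_neg (S t : ℝ) : unsmoothingKernel S (-t) = unsmoothingKernel S t := by
  simp only [unsmoothingKernel, mul_neg, Real.sin_neg, neg_sq]
  ring

lemma measurable_unsmoothingKernel (S : ℝ) : Measurable (unsmoothingKernel S) := by
  unfold unsmoothingKernel; fun_prop

lemma abs_unsmoothingKernel (S t : ℝ) : |unsmoothingKernel S t|
    = |Real.sin (π * S * t)| * |Real.sin (π * t)| / (π ^ 2 * t ^ 2) := by
  rw [unsmoothingKernel, abs_div, abs_mul, abs_of_nonneg (by positivity : 0 ≤ π ^ 2 * t ^ 2)]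

lemma abs_unsmoothingKernel_le {S : ℝ} (hS : 0 ≤ S) (t : ℝ) :
    |unsmoothingKernel S t| ≤ S := by
  rcases eq_or_ne t 0 with rfl | ht
  · simpa [unsmoothingKernel] using hS
  rw [abs_unsmoothingKernel, div_le_iff₀ (by positivity)]
  calc |Real.sin (π * S * t)| * |Real.sin (π * t)| ≤ |π * S * t| * |π * t| :=
        mul_le_mul Real.abs_sin_le_abs Real.abs_sin_le_abs (abs_nonneg _) (abs_nonneg _)
    _ = S * (π ^ 2 * t ^ 2) := by
        rw [abs_mul, abs_mul, abs_mul, abs_of_pos pi_pos, abs_of_nonneg hS, ← sq_abs t]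
        ring

lemma abs_unsmoothingKernel_le_inv (S t : ℝ) : |unsmoothingKernel S t| ≤ (π * |t|)⁻¹ := by
  rcases eq_or_ne t 0 with rfl | ht
  · simp [unsmoothingKernel]
  rw [abs_unsmoothingKernel, div_le_iff₀ (by positivity)]
  calc |Real.sin (π * S * t)| * |Real.sin (π * t)| ≤ 1 * |π * t| :=
        mul_le_mul (Real.abs_sin_le_one _) Real.abs_sin_le_abs (abs_nonneg _) zero_le_one
    _ = (π * |t|)⁻¹ * (π ^ 2 * t ^ 2) := by
        rw [abs_mul, abs_of_pos pi_pos, ← sq_abs t]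
        field_simp

lemma abs_unsmoothingKernel_le_inv_sq (S t : ℝ) :
    |unsmoothingKernel S t| ≤ (π ^ 2 * t ^ 2)⁻¹ := by
  rw [abs_unsmoothingKernel, div_eq_mul_inv]
  refine mul_le_of_le_one_left (by positivity) ?_
  exact mul_le_one₀ (Real.abs_sin_le_one _) (abs_nonneg _) (Real.abs_sin_le_one _)

lemma abs_unsmoothingKernel_le_rpow (S t : ℝ) :
    |unsmoothingKernel S t| ≤ (π ^ 2)⁻¹ * t ^ (-2 : ℝ) := by
  refine (abs_unsmoothingKernel_le_inv_sq S t).trans_eq ?_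
  rw [show (-2 : ℝ) = ((-2 : ℤ) : ℝ) by norm_num, Real.rpow_intCast, zpow_neg, mul_inv]
  norm_cast

lemma integrableOn_Ioi_one_unsmoothingKernel (S : ℝ) :
    IntegrableOn (unsmoothingKernel S) (Ioi 1) := by
  refine ((integrableOn_Ioi_rpow_of_lt (by norm_num : (-2 : ℝ) < -1) one_pos).const_mul
    (π ^ 2)⁻¹).mono' (measurable_unsmoothingKernel S).aestronglyMeasurable ?_
  exact ae_of_all _ (abs_unsmoothingKernel_le_rpow S)

lemma integrable_unsmoothingKernel {S : ℝ} (hS : 0 ≤ S) : Integrable (unsmoothingKernel S) := by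
  have hIoc : IntegrableOn (unsmoothingKernel S) (Ioc 0 1) :=
    Measure.integrableOn_of_bounded measure_Ioc_lt_top.ne
      (measurable_unsmoothingKernel S).aestronglyMeasurable
      (ae_of_all _ fun t => abs_unsmoothingKernel_le hS t)
  refine Integrable.of_even_of_integrableOn_Ioi (unsmoothingKernel_neg S) ?_
  rw [← Ioc_union_Ioi_eq_Ioi zero_le_one]
  exact hIoc.union (integrableOn_Ioi_one_unsmoothingKernel S)

lemma intervalIntegral_abs_unsmoothingKernel_le_one {S : ℝ} (hS : 0 < S) :
    ∫ t in (0)..S⁻¹, |unsmoothingKernel S t| ≤ 1 := by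
  calc ∫ t in (0)..S⁻¹, |unsmoothingKernel S t| ≤ ∫ _ in (0)..S⁻¹, S :=
        intervalIntegral.integral_mono_on (by positivity)
          (integrable_unsmoothingKernel hS.le).abs.intervalIntegrable intervalIntegrable_const
          fun t _ => abs_unsmoothingKernel_le hS.le t
    _ = 1 := by simp [hS.ne']

lemma intervalIntegral_abs_unsmoothingKernel_le_log {S : ℝ} (hS : 1 ≤ S) :
    ∫ t in S⁻¹..1, |unsmoothingKernel S t| ≤ π⁻¹ * Real.log S := by
  have hS₁ : S⁻¹ ≤ 1 := inv_le_one_of_one_le₀ hS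
  have hpos : ∀ t ∈ Icc S⁻¹ 1, 0 < t := fun t ht => (inv_pos.mpr (by linarith)).trans_le ht.1
  calc ∫ t in S⁻¹..1, |unsmoothingKernel S t| ≤ ∫ t in S⁻¹..1, π⁻¹ * t⁻¹ := by
        refine intervalIntegral.integral_mono_on hS₁
          (integrable_unsmoothingKernel (by linarith)).abs.intervalIntegrable
          ((intervalIntegral.intervalIntegrable_inv (fun t ht => ?_) continuousOn_id).const_mul _)
          fun t ht => ?_
        · rw [uIcc_of_le hS₁] at ht
          exact (hpos t ht).ne'
        · exact (abs_unsmoothingKernel_le_inv S t).trans_eq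
            (by rw [abs_of_pos (hpos t ht), mul_inv])
    _ = π⁻¹ * Real.log S := by
        rw [intervalIntegral.integral_const_mul, integral_inv_of_pos (by positivity) one_pos,
          one_div, inv_inv]

lemma setIntegral_Ioi_one_abs_unsmoothingKernel_le (S : ℝ) :
    ∫ t in Ioi 1, |unsmoothingKernel S t| ≤ (π ^ 2)⁻¹ := by
  calc ∫ t in Ioi 1, |unsmoothingKernel S t| ≤ ∫ t in Ioi 1, (π ^ 2)⁻¹ * t ^ (-2 : ℝ) :=
        setIntegral_mono_on (integrableOn_Ioi_one_unsmoothingKernel S).abs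
          ((integrableOn_Ioi_rpow_of_lt (by norm_num : (-2 : ℝ) < -1) one_pos).const_mul _)
          measurableSet_Ioi fun t _ => abs_unsmoothingKernel_le_rpow S t
    _ = (π ^ 2)⁻¹ := by
        rw [integral_const_mul, integral_Ioi_rpow_of_lt (by norm_num) one_pos]
        norm_num

lemma integral_abs_unsmoothingKernel_le {S : ℝ} (hS : 1 ≤ S) :
    ∫ t, |unsmoothingKernel S t| ≤ 3 + Real.log S := by
  set k : ℝ → ℝ := fun t => |unsmoothingKernel S t|
  have hk : Integrable k := (integrable_unsmoothingKernel (by linarith)).abs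
  have heven (t : ℝ) : k |t| = k t := by
    rcases abs_choice t with h | h <;> simp only [k, h, unsmoothingKernel_neg]
  have hsplit : ∫ t, k t
      = 2 * ((∫ t in (0)..S⁻¹, k t) + (∫ t in S⁻¹..1, k t) + ∫ t in Ioi 1, k t) := by
    rw [← integral_congr_ae (ae_of_all _ heven), integral_comp_abs, add_assoc,
      intervalIntegral.integral_interval_add_Ioi hk.integrableOn hk.integrableOn,
      intervalIntegral.integral_interval_add_Ioi hk.integrableOn hk.integrableOn]
  have hπ := pi_gt_three
  have hπ₁ : 2 * π⁻¹ ≤ 1 := by rw [← div_eq_mul_inv, div_le_one pi_pos]; linarith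
  have hπ₂ : 2 * (π ^ 2)⁻¹ ≤ 1 := by
    rw [← div_eq_mul_inv, div_le_one (by positivity)]; nlinarith
  rw [hsplit]
  nlinarith [intervalIntegral_abs_unsmoothingKernel_le_one (S := S) (by linarith),
    intervalIntegral_abs_unsmoothingKernel_le_log hS,
    setIntegral_Ioi_one_abs_unsmoothingKernel_le S, Real.log_nonneg hS]

/-- Unsmoothing kernel (variant of Lemma 9 of Duke–Friedlander–Iwaniec):
for any integer `x ≥ 1` there is an integrable `h : ℝ → ℂ` with
`∫|h| ≤ 7 + log x` whose Fourier transform at integers is the indicator of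
`[-x, x]`. -/
theorem unsmoothing_kernel (x : ℕ) (hx : 1 ≤ x) :
    ∃ h : ℝ → ℂ, Integrable h ∧
      (∫ t : ℝ, ‖h t‖) ≤ 7 + Real.log x ∧
      ∀ n : ℤ, (∫ t : ℝ, h t * Complex.exp (2 * Real.pi * Complex.I * n * t))
        = if |n| ≤ (x : ℤ) then 1 else 0 := by
  have hx₁ : (1 : ℝ) ≤ x := by exact_mod_cast hx
  set S : ℝ := 2 * x + 1
  have hK : Integrable (unsmoothingKernel S) := integrable_unsmoothingKernel (by positivity)
  have hFT : 𝓕 (fun ξ => (trapezoid x ξ : ℂ)) =ᵐ[volume] fun t => (unsmoothingKernel S t : ℂ) := by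
    filter_upwards [Measure.ae_ne volume 0] with t ht using fourier_trapezoid x.cast_nonneg ht
  refine ⟨fun t => (unsmoothingKernel S t : ℂ), hK.ofReal, ?_, fun n => ?_⟩
  · have hlogS : Real.log S ≤ Real.log 3 + Real.log x := by
      rw [← Real.log_mul three_ne_zero (by positivity)]
      exact Real.log_le_log (by positivity) (by linarith)
    have hlog3 : Real.log 3 ≤ 2 := by linarith [Real.log_le_sub_one_of_pos three_pos]
    simp only [norm_real, Real.norm_eq_abs]
    linarith [integral_abs_unsmoothingKernel_le (S := S) (by linarith)]
  · have hT : Continuous fun ξ => (trapezoid x ξ : ℂ) :=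
      continuous_ofReal.comp (continuous_trapezoid x)
    rw [← ofReal_intCast, integral_mul_cexp_eq_of_fourier_ae_eq hT (integrable_trapezoid x).ofReal
      hFT hK.ofReal]
    split_ifs with h
    · have habs : |(n : ℝ)| ≤ x := by exact_mod_cast h
      rw [trapezoid_of_abs_le habs, ofReal_one]
    · have habs : (x : ℝ) + 1 ≤ |(n : ℝ)| := by
        have : (x : ℤ) + 1 ≤ |n| := by omega
        exact_mod_cast this
      rw [trapezoid_of_le_abs habs, ofReal_zero]
end

section
/- Fix T ≥ 2 and real numbers c, x, θ with x > 0, θ ≠ 0. Let f(τ) = log(8π³·xN/(|θN|·|T+τ|·|T−τ|)) (the derivative of the Voronoi phase). Suppose |τ| ≍ |θN| with T^{2/3} ≤ |θN| ≤ T^{1−ε} and T ≥ T₀(ε). If |log(8π³ xN/(|θN| T²))| > 100 (θN)²/T², then for all τ in the support (|τ| between |θN|/8 and 8|θN|, |τ±T| > √T), |f(τ)| ≥ c₀ · |log(8π³ xN/(|θN| T²))| for an absolute constant c₀ > 0. -/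
open Real Filter Topology

/-! For `|τ| < T` we have `|T + τ| |T - τ| = T² (1 - (τ/T)²)`, so the phase derivative is
`log (a / (K T²)) - log (1 - u)` with `u = (τ/T)² ≤ 64 (K/T)²`. Since `K ≤ T^{1-ε} = o(T)`,
the correction `|log (1 - u)| ≤ u / (1 - u)` is at most `65 (K/T)²`, which the hypothesis
`|log (a / (K T²))| > 100 (K/T)²` makes less than two thirds of the main term. -/

theorem abs_add_mul_abs_sub_eq {T τ : ℝ} (hτ : |τ| < T) :
    |T + τ| * |T - τ| = T ^ 2 * (1 - (τ / T) ^ 2) := by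
  obtain ⟨hlt, hgt⟩ := abs_lt.mp hτ
  have hT : T ≠ 0 := by linarith
  rw [abs_of_pos (by linarith), abs_of_pos (by linarith)]
  field_simp
  ring

theorem log_div_abs_add_mul_abs_sub {a K T τ : ℝ} (ha : a ≠ 0) (hK : K ≠ 0) (hτ : |τ| < T) :
    log (a / (K * |T + τ| * |T - τ|)) = log (a / (K * T ^ 2)) - log (1 - (τ / T) ^ 2) := by
  have hT : 0 < T := (abs_nonneg τ).trans_lt hτ
  have hu : (τ / T) ^ 2 < 1 := by
    rw [div_pow, div_lt_one (by positivity), ← sq_abs]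
    exact pow_lt_pow_left₀ hτ (abs_nonneg τ) two_ne_zero
  rw [mul_assoc, abs_add_mul_abs_sub_eq hτ, ← mul_assoc, ← div_div,
    log_div (by positivity) (by linarith)]

theorem abs_log_div_abs_add_mul_abs_sub_ge {a K T τ : ℝ} (ha : a ≠ 0) (hK : 0 < K)
    (hKT : 65 * K ≤ T) (hτ : |τ| ≤ 8 * K)
    (hL : |log (a / (K * T ^ 2))| > 100 * K ^ 2 / T ^ 2) :
    |log (a / (K * |T + τ| * |T - τ|))| ≥ 1 / 3 * |log (a / (K * T ^ 2))| := by
  have hT : 0 < T := by linarith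
  have hτT : |τ| < T := by linarith
  rw [log_div_abs_add_mul_abs_sub ha hK.ne' hτT]
  have hr : K ^ 2 / T ^ 2 ≤ 1 / 4225 := by
    rw [div_le_div_iff₀ (by positivity) (by norm_num)]
    nlinarith
  have hu : (τ / T) ^ 2 ≤ 64 * (K ^ 2 / T ^ 2) := by
    rw [div_pow, ← mul_div_assoc]
    gcongr
    calc τ ^ 2 = |τ| ^ 2 := (sq_abs τ).symm
      _ ≤ (8 * K) ^ 2 := by gcongr
      _ = 64 * K ^ 2 := by ring
  have hcorr : |log (1 - (τ / T) ^ 2)| ≤ 65 * (K ^ 2 / T ^ 2) := by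
    have hu₀ : |(τ / T) ^ 2| = (τ / T) ^ 2 := abs_of_nonneg (by positivity)
    have hlog := abs_log_sub_add_sum_range_le (x := (τ / T) ^ 2) (by linarith) 0
    rw [Finset.sum_range_zero, zero_add, pow_one, hu₀] at hlog
    calc |log (1 - (τ / T) ^ 2)| ≤ (τ / T) ^ 2 / (1 - (τ / T) ^ 2) := hlog
      _ ≤ 65 * (K ^ 2 / T ^ 2) := by rw [div_le_iff₀ (by linarith)]; nlinarith
  rw [mul_div_assoc] at hL
  linarith [abs_sub_abs_le_abs_sub (log (a / (K * T ^ 2))) (log (1 - (τ / T) ^ 2)),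
    abs_nonneg (log (a / (K * T ^ 2)))]

theorem eventually_rpow_one_sub_le_mul {ε δ : ℝ} (hε : 0 < ε) (hδ : 0 < δ) :
    ∀ᶠ T in atTop, T ^ (1 - ε) ≤ δ * T := by
  filter_upwards [(tendsto_rpow_neg_atTop hε).eventually (ge_mem_nhds hδ),
    eventually_gt_atTop 0] with T hsmall hT
  rw [sub_eq_add_neg, rpow_add hT, rpow_one, mul_comm δ]
  exact mul_le_mul_of_nonneg_left hsmall hT.le

/-- Phase-derivative lower bound in Lemma `phibound1`: with
`f(τ) = log(8π³xN/(θN·|T+τ|·|T−τ|))`, if `T^{2/3} ≤ θN ≤ T^{1−ε}`, `T` is large,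
and the stationary condition fails, i.e.
`|log(8π³xN/(θN T²))| > 100 (θN)²/T²`, then on the support
(`θN/8 ≤ |τ| ≤ 8θN`, `|τ±T| > √T`) one has
`|f(τ)| ≥ c₀ |log(8π³xN/(θN T²))|` for an absolute constant `c₀ > 0`. -/
theorem phase_derivative_lower_bound :
    ∃ c₀ > (0 : ℝ), ∀ ε > (0 : ℝ), ∃ T₀ : ℝ, ∀ (T x θ N τ : ℝ),
      T ≥ T₀ → x > 0 → θ > 0 → N > 0 →
      T ^ ((2 : ℝ) / 3) ≤ θ * N → θ * N ≤ T ^ (1 - ε) →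
      |Real.log (8 * Real.pi ^ 3 * x * N / (θ * N * T ^ 2))|
        > 100 * (θ * N) ^ 2 / T ^ 2 →
      θ * N / 8 ≤ |τ| → |τ| ≤ 8 * (θ * N) →
      |τ + T| > Real.sqrt T → |τ - T| > Real.sqrt T →
      |Real.log (8 * Real.pi ^ 3 * x * N / (θ * N * |T + τ| * |T - τ|))|
        ≥ c₀ * |Real.log (8 * Real.pi ^ 3 * x * N / (θ * N * T ^ 2))| := by
  refine ⟨1 / 3, by norm_num, fun ε hε => ?_⟩
  obtain ⟨T₀, hT₀⟩ := eventually_atTop.mp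
    (eventually_rpow_one_sub_le_mul hε (by norm_num : (0 : ℝ) < 1 / 65))
  refine ⟨T₀, fun T x θ N τ hT hx hθ hN _ hup hL _ hτ _ _ => ?_⟩
  have hKT : 65 * (θ * N) ≤ T := by linarith [hT₀ T hT]
  exact abs_log_div_abs_add_mul_abs_sub_ge (by positivity) (by positivity) hKT hτ hL
end
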